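/- For every formula φ ∈ Fm, ⊢_{EL5} ¬K□φ ↔ □¬□φ. -/

import Mathlib

/-- Formulas of the modal-epistemic language: variables, ⊥, ∧, ∨, →, □, K. -/
inductive Fm : Type
  | var : ℕ → Fm
  | bot : Fm
  | and : Fm → Fm → Fm
  | or : Fm → Fm → Fm
  | imp : Fm → Fm → Fm
  | box : Fm → Fm
  | k : Fm → Fm
  deriving DecidableEq

namespace Fm

/-- ¬φ := φ → ⊥ -/
def neg (φ : Fm) : Fm := φ.imp .bot

/-- ⊤ := ¬⊥ -/
def top : Fm := neg .bot

/-- φ ↔ ψ := (φ→ψ) ∧ (ψ→φ) -/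
def iff (φ ψ : Fm) : Fm := (φ.imp ψ).and (ψ.imp φ)

/-- Propositional identity φ ≡ ψ := □(φ→ψ) ∧ □(ψ→φ). -/
def ident (φ ψ : Fm) : Fm := ((φ.imp ψ).box).and ((ψ.imp φ).box)

/-- Substitution of `σ` for every occurrence of the variable `x`. -/
def subst (x : ℕ) (σ : Fm) : Fm → Fm
  | var n => if n = x then σ else var n
  | bot => bot
  | and a b => and (subst x σ a) (subst x σ b)
  | or a b => or (subst x σ a) (subst x σ b)
  | imp a b => imp (subst x σ a) (subst x σ b)
  | box a => box (subst x σ a)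
  | k a => k (subst x σ a)

/-- Propositional formulas (the set Fm₀): neither □ nor K occurs. -/
def IsProp : Fm → Prop
  | var _ => True
  | bot => True
  | and a b => a.IsProp ∧ b.IsProp
  | or a b => a.IsProp ∧ b.IsProp
  | imp a b => a.IsProp ∧ b.IsProp
  | box _ => False
  | k _ => False

end Fm

/-- Hilbert-style axiom schemes of intuitionistic propositional logic, with
schematic letters ranging over all formulas of `Fm` (so the derivable formulas
are exactly the substitution instances of IPC theorems). -/
inductive IntAx : Fm → Prop
  | k (φ ψ : Fm) : IntAx (φ.imp (ψ.imp φ))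
  | s (φ ψ χ : Fm) : IntAx ((φ.imp (ψ.imp χ)).imp ((φ.imp ψ).imp (φ.imp χ)))
  | andIntro (φ ψ : Fm) : IntAx (φ.imp (ψ.imp (φ.and ψ)))
  | andLeft (φ ψ : Fm) : IntAx ((φ.and ψ).imp φ)
  | andRight (φ ψ : Fm) : IntAx ((φ.and ψ).imp ψ)
  | orInl (φ ψ : Fm) : IntAx (φ.imp (φ.or ψ))
  | orInr (φ ψ : Fm) : IntAx (ψ.imp (φ.or ψ))
  | orElim (φ ψ χ : Fm) : IntAx ((φ.imp χ).imp ((ψ.imp χ).imp ((φ.or ψ).imp χ)))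
  | exfalso (φ : Fm) : IntAx (Fm.bot.imp φ)

/-- Derivability in intuitionistic propositional calculus from hypotheses `Φ`
(Hilbert style, Modus Ponens as the only rule). -/
inductive IPC (Φ : Set Fm) : Fm → Prop
  | hyp {φ} : φ ∈ Φ → IPC Φ φ
  | ax {φ} : IntAx φ → IPC Φ φ
  | mp {φ ψ} : IPC Φ (φ.imp ψ) → IPC Φ φ → IPC Φ ψ

/-- The modal logics L3, EL3⁻ (written `EL3m`), EL3, EL4, EL5. -/
inductive ModalLogic : Type
  | L3 | EL3m | EL3 | EL4 | EL5
  deriving DecidableEq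

/-- The axioms of the logic `L`:
(INT) all theorems of IPC and their substitution instances,
(A1) □(φ∨ψ)→(□φ∨□ψ), (A2) □φ→φ, (A3) □(φ→ψ)→□(□φ→□ψ);
(A7) □φ→□Kφ for the epistemic logics EL3⁻, EL3, EL4, EL5;
(A8) Kφ→¬¬φ for EL3, EL4, EL5; (A4) □φ→□□φ for EL4, EL5;
(A5) ¬□φ→□¬□φ for EL5. -/
inductive IsAxiom : ModalLogic → Fm → Prop
  | int {L : ModalLogic} {φ : Fm} : IPC ∅ φ → IsAxiom L φ
  | a1 (L : ModalLogic) (φ ψ : Fm) :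
      IsAxiom L (((φ.or ψ).box).imp ((φ.box).or (ψ.box)))
  | a2 (L : ModalLogic) (φ : Fm) : IsAxiom L ((φ.box).imp φ)
  | a3 (L : ModalLogic) (φ ψ : Fm) :
      IsAxiom L (((φ.imp ψ).box).imp (((φ.box).imp (ψ.box)).box))
  | a7 {L : ModalLogic} (φ : Fm) : L ≠ ModalLogic.L3 →
      IsAxiom L ((φ.box).imp ((φ.k).box))
  | a8 {L : ModalLogic} (φ : Fm) :
      L = ModalLogic.EL3 ∨ L = ModalLogic.EL4 ∨ L = ModalLogic.EL5 →
      IsAxiom L ((φ.k).imp (φ.neg.neg))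
  | a4 {L : ModalLogic} (φ : Fm) :
      L = ModalLogic.EL4 ∨ L = ModalLogic.EL5 →
      IsAxiom L ((φ.box).imp (φ.box.box))
  | a5 {L : ModalLogic} (φ : Fm) : L = ModalLogic.EL5 →
      IsAxiom L ((φ.box.neg).imp (φ.box.neg.box))

/-- Derivability from hypotheses `Φ` in logic `L`: hypotheses, axioms, the
theorem scheme (T) of tertium non datur, Modus Ponens, and Axiom Necessitation
(applicable only to axioms). -/
inductive Deriv (L : ModalLogic) (Φ : Set Fm) : Fm → Prop
  | hyp {φ} : φ ∈ Φ → Deriv L Φ φ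
  | ax {φ} : IsAxiom L φ → Deriv L Φ φ
  | tnd (φ : Fm) : Deriv L Φ (φ.or φ.neg)
  | mp {φ ψ} : Deriv L Φ (φ.imp ψ) → Deriv L Φ φ → Deriv L Φ ψ
  | an {φ} : IsAxiom L φ → Deriv L Φ (φ.box)

/-- ⊢_L φ : theoremhood in logic `L`. -/
def Thm (L : ModalLogic) (φ : Fm) : Prop := Deriv L ∅ φ

/-!
By (A4), (A7) and (A2), `□φ → □□φ → □K□φ → K□φ`; contraposing and applying (A5) gives
`¬K□φ → ¬□φ → □¬□φ`. Conversely `□¬□φ` yields `¬□φ` by (A2), which contradicts the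
`¬¬□φ` that (A8) extracts from `K□φ`.
-/

namespace IPC

variable {Φ : Set Fm}

theorem imp_self (a : Fm) : IPC Φ (a.imp a) :=
  .mp (.mp (.ax (.s a (a.imp a) a)) (.ax (.k a (a.imp a)))) (.ax (.k a a))

theorem deduction {φ ψ : Fm} (h : IPC (insert φ Φ) ψ) : IPC Φ (φ.imp ψ) := by
  induction h with
  | hyp hm =>
    rcases Set.mem_insert_iff.1 hm with rfl | hm
    · exact imp_self _
    · exact .mp (.ax (.k _ _)) (.hyp hm)
  | ax ha => exact .mp (.ax (.k _ _)) (.ax ha)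
  | mp _ _ ih₁ ih₂ => exact .mp (.mp (.ax (.s _ _ _)) ih₁) ih₂

theorem imp_trans (a b c : Fm) : IPC Φ ((a.imp b).imp ((b.imp c).imp (a.imp c))) := by
  refine deduction (deduction (deduction ?_))
  exact .mp (.hyp (φ := b.imp c) (by simp)) (.mp (.hyp (φ := a.imp b) (by simp)) (.hyp (by simp)))

theorem imp_neg_of_imp_neg_of_imp_neg_neg (c b k : Fm) :
    IPC Φ ((c.imp b.neg).imp ((k.imp b.neg.neg).imp (c.imp k.neg))) := by
  refine deduction (deduction (deduction (deduction ?_)))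
  exact .mp (.mp (.hyp (φ := k.imp b.neg.neg) (by simp)) (.hyp (by simp)))
    (.mp (.hyp (φ := c.imp b.neg) (by simp)) (.hyp (by simp)))

end IPC

namespace Deriv

variable {L : ModalLogic} {Φ : Set Fm}

theorem of_ipc {φ : Fm} (h : IPC ∅ φ) : Deriv L Φ φ :=
  .ax (.int h)

theorem imp_trans {a b c : Fm} (h₁ : Deriv L Φ (a.imp b)) (h₂ : Deriv L Φ (b.imp c)) :
    Deriv L Φ (a.imp c) :=
  .mp (.mp (of_ipc (IPC.imp_trans a b c)) h₁) h₂

theorem neg_imp_neg {a b : Fm} (h : Deriv L Φ (a.imp b)) : Deriv L Φ (b.neg.imp a.neg) :=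
  .mp (of_ipc (IPC.imp_trans a b .bot)) h

theorem iff_intro {a b : Fm} (h₁ : Deriv L Φ (a.imp b)) (h₂ : Deriv L Φ (b.imp a)) :
    Deriv L Φ (a.iff b) :=
  .mp (.mp (of_ipc (.ax (.andIntro _ _))) h₁) h₂

theorem box_imp_k_box (hL : L = .EL4 ∨ L = .EL5) (φ : Fm) : Deriv L Φ (φ.box.imp φ.box.k) :=
  imp_trans (imp_trans (.ax (.a4 φ hL)) (.ax (.a7 φ.box (by rcases hL with rfl | rfl <;> decide))))
    (.ax (.a2 _ φ.box.k))

theorem neg_k_box_imp_box_neg_box (φ : Fm) :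
    Deriv .EL5 Φ (φ.box.k.neg.imp φ.box.neg.box) :=
  imp_trans (neg_imp_neg (box_imp_k_box (.inr rfl) φ)) (.ax (.a5 φ rfl))

theorem box_neg_box_imp_neg_k_box (hL : L = .EL3 ∨ L = .EL4 ∨ L = .EL5) (φ : Fm) :
    Deriv L Φ (φ.box.neg.box.imp φ.box.k.neg) :=
  .mp (.mp (of_ipc (IPC.imp_neg_of_imp_neg_of_imp_neg_neg _ φ.box _)) (.ax (.a2 _ φ.box.neg)))
    (.ax (.a8 φ.box hL))

end Deriv

/-- ⊢_{EL5} ¬K□φ ↔ □¬□φ. -/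
theorem stmt_7 (φ : Fm) :
    Thm ModalLogic.EL5 ((φ.box.k.neg).iff (φ.box.neg.box)) :=
  Deriv.iff_intro (Deriv.neg_k_box_imp_box_neg_box φ)
    (Deriv.box_neg_box_imp_neg_k_box (.inr (.inr rfl)) φ)
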